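/- Let k ∈ (0,1). For every integer n ≥ 1, the function u ↦ −E(u,k)·cos u + (1−k²)·F(u,k)·cos u + sin u·√(1−k²sin²u) (which is the function f₄(p) = −cn p·E(p) + p·cn p·(1−k²) + sn p·dn p of the paper written in the Legendre variable u = am(p,k)) has exactly one zero in the open interval ((2n−1)π/2, (2n+1)π/2), and this zero lies in the subinterval (nπ, nπ + π/2). (Proposition on the roots p₂ⁿ(k) of f₄, expressed in Legendre form: p₂ⁿ(k) ∈ (2nK(k), (2n+1)K(k)).) -/

import Mathlib

open Real

/-- Incomplete elliptic integral of the first kind in Legendre form: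
`F(u,k) = ∫₀ᵘ dφ/√(1 − k² sin² φ)`. -/
noncomputable def EllF (u k : ℝ) : ℝ :=
  ∫ φ in (0:ℝ)..u, 1 / Real.sqrt (1 - k ^ 2 * Real.sin φ ^ 2)

/-- Incomplete elliptic integral of the second kind in Legendre form:
`E(u,k) = ∫₀ᵘ √(1 − k² sin² φ) dφ`. -/
noncomputable def EllE (u k : ℝ) : ℝ :=
  ∫ φ in (0:ℝ)..u, Real.sqrt (1 - k ^ 2 * Real.sin φ ^ 2)

/-!
Away from the zeros of `cos`, `f₄ = cos u · (h u + tan u · Δ u)` with `Δ u = √(1 − k² sin² u)` and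
`h = (1 − k²) F − E`. The second factor has derivative `(1 − k²) / (Δ u · cos² u) > 0`, so it is
strictly increasing on each interval `((2n−1)π/2, (2n+1)π/2)`. Since `h' = −k² cos² / Δ` is `≤ 0`,
and `< 0` on `(0, π/2)`, while `h 0 = 0`, we get `h < 0` on `[π/2, ∞)`; so the factor is negative at
`nπ`, and it becomes positive before `nπ + π/2` because `tan` blows up while `h` stays bounded.
-/

noncomputable def ellDelta (k u : ℝ) : ℝ := √(1 - k ^ 2 * sin u ^ 2)

noncomputable def ellH (k u : ℝ) : ℝ := (1 - k ^ 2) * EllF u k - EllE u k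

noncomputable def f4DivCos (k u : ℝ) : ℝ := ellH k u + tan u * ellDelta k u

theorem StrictMonoOn.exists_mem_Ioo_forall_eq_zero_iff {f : ℝ → ℝ} {s : Set ℝ}
    (hmono : StrictMonoOn f s) (hcont : ContinuousOn f s) {a b : ℝ} (hab : a ≤ b)
    (hs : Set.Icc a b ⊆ s) (ha : f a < 0) (hb : 0 < f b) :
    ∃ x ∈ Set.Ioo a b, ∀ y ∈ s, f y = 0 ↔ y = x := by
  obtain ⟨x, hx, hfx⟩ := intermediate_value_Ioo hab (hcont.mono hs) ⟨ha, hb⟩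
  have hxs : x ∈ s := hs (Set.Ioo_subset_Icc_self hx)
  refine ⟨x, hx, fun y hy => ⟨fun hfy => hmono.injOn hy hxs (hfy.trans hfx.symm), ?_⟩⟩
  rintro rfl
  exact hfx

theorem cos_ne_zero_of_mem_Ioo {n : ℤ} {u : ℝ}
    (hu : u ∈ Set.Ioo ((2 * (n : ℝ) - 1) * π / 2) ((2 * (n : ℝ) + 1) * π / 2)) : cos u ≠ 0 := by
  intro hcos
  obtain ⟨m, rfl⟩ := cos_eq_zero_iff.mp hcos
  have hlt : (n : ℝ) < m + 1 := by nlinarith [hu.1, pi_pos]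
  have hgt : (m : ℝ) < n := by nlinarith [hu.2, pi_pos]
  have : n < m + 1 := by exact_mod_cast hlt
  have : m < n := by exact_mod_cast hgt
  omega

section

variable {k : ℝ}

theorem one_sub_sq_mul_sin_sq_pos (hk : k ^ 2 < 1) (u : ℝ) : 0 < 1 - k ^ 2 * sin u ^ 2 := by
  nlinarith [sin_sq_le_one u, sq_nonneg k]

theorem ellDelta_pos (hk : k ^ 2 < 1) (u : ℝ) : 0 < ellDelta k u :=
  sqrt_pos.mpr (one_sub_sq_mul_sin_sq_pos hk u)

theorem ellDelta_sq (hk : k ^ 2 < 1) (u : ℝ) : ellDelta k u ^ 2 = 1 - k ^ 2 * sin u ^ 2 :=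
  sq_sqrt (one_sub_sq_mul_sin_sq_pos hk u).le

theorem sqrt_one_sub_sq_le_ellDelta (u : ℝ) : √(1 - k ^ 2) ≤ ellDelta k u :=
  sqrt_le_sqrt (by nlinarith [sin_sq_le_one u, sq_nonneg k])

theorem continuous_ellDelta : Continuous (ellDelta k) := by
  unfold ellDelta
  fun_prop

theorem hasDerivAt_ellDelta (hk : k ^ 2 < 1) (u : ℝ) :
    HasDerivAt (ellDelta k) (-(k ^ 2 * sin u * cos u) / ellDelta k u) u := by
  have h := ((((hasDerivAt_sin u).pow 2).const_mul (k ^ 2)).const_sub 1).sqrt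
    (one_sub_sq_mul_sin_sq_pos hk u).ne'
  refine h.congr_deriv ?_
  simp only [ellDelta, Pi.pow_apply]
  field_simp
  ring

theorem hasDerivAt_ellH (hk : k ^ 2 < 1) (u : ℝ) :
    HasDerivAt (ellH k) (-(k ^ 2 * cos u ^ 2) / ellDelta k u) u := by
  have hF : HasDerivAt (EllF · k) (1 / ellDelta k u) u :=
    ((continuous_const.div continuous_ellDelta fun v =>
      (ellDelta_pos hk v).ne').integral_hasStrictDerivAt 0 u).hasDerivAt
  have hE : HasDerivAt (EllE · k) (ellDelta k u) u :=
    ((continuous_ellDelta (k := k)).integral_hasStrictDerivAt 0 u).hasDerivAt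
  refine ((hF.const_mul (1 - k ^ 2)).sub hE).congr_deriv ?_
  have hpos := ellDelta_pos hk u
  field_simp
  linear_combination -ellDelta_sq hk u + k ^ 2 * sin_sq_add_cos_sq u

theorem ellH_zero : ellH k 0 = 0 := by
  simp [ellH, EllF, EllE]

theorem antitone_ellH (hk : k ^ 2 < 1) : Antitone (ellH k) :=
  antitone_of_hasDerivAt_nonpos (hasDerivAt_ellH hk) fun u =>
    div_nonpos_of_nonpos_of_nonneg (by nlinarith [sq_nonneg k, sq_nonneg (cos u)])
      (ellDelta_pos hk u).le

theorem ellH_neg (hk : k ^ 2 < 1) (hk0 : k ≠ 0) {u : ℝ} (hu : π / 2 ≤ u) : ellH k u < 0 := by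
  have hanti : StrictAntiOn (ellH k) (Set.Icc 0 (π / 2)) := by
    refine strictAntiOn_of_hasDerivWithinAt_neg (convex_Icc _ _)
      (fun x _ => (hasDerivAt_ellH hk x).continuousAt.continuousWithinAt)
      (fun x _ => (hasDerivAt_ellH hk x).hasDerivWithinAt) fun x hx => ?_
    rw [interior_Icc] at hx
    have hcos : 0 < cos x := cos_pos_of_mem_Ioo ⟨by linarith [hx.1, pi_pos], hx.2⟩
    exact div_neg_of_neg_of_pos (neg_lt_zero.mpr (mul_pos (sq_pos_iff.mpr hk0) (pow_pos hcos 2)))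
      (ellDelta_pos hk x)
  have hπ := pi_pos
  calc ellH k u ≤ ellH k (π / 2) := antitone_ellH hk hu
    _ < ellH k 0 := hanti ⟨le_rfl, by positivity⟩ ⟨by positivity, le_rfl⟩ (by positivity)
    _ = 0 := ellH_zero

theorem hasDerivAt_f4DivCos (hk : k ^ 2 < 1) {u : ℝ} (hc : cos u ≠ 0) :
    HasDerivAt (f4DivCos k) ((1 - k ^ 2) / (ellDelta k u * cos u ^ 2)) u := by
  refine ((hasDerivAt_ellH hk u).add
    ((hasDerivAt_tan hc).mul (hasDerivAt_ellDelta hk u))).congr_deriv ?_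
  have hpos := ellDelta_pos hk u
  rw [tan_eq_sin_div_cos]
  field_simp
  linear_combination ellDelta_sq hk u - k ^ 2 * (1 + cos u ^ 2) * sin_sq_add_cos_sq u

theorem exists_f4DivCos_pos (hk : k ^ 2 < 1) (n : ℤ) :
    ∃ u ∈ Set.Ioo (n * π) (n * π + π / 2), 0 < f4DivCos k u := by
  set M := ellH k (n * π + π / 2)
  have hs : 0 < √(1 - k ^ 2) := sqrt_pos.mpr (by linarith)
  set c := (1 + |M|) / √(1 - k ^ 2)
  have hc : 0 < c := by positivity
  have harctan : 0 < arctan c := by simpa using arctan_strictMono hc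
  have htan : tan (n * π + arctan c) = c := by
    rw [add_comm, tan_periodic.int_mul n, tan_arctan]
  have hlt : n * π + arctan c < n * π + π / 2 := by linarith [arctan_lt_pi_div_two c]
  refine ⟨n * π + arctan c, ⟨by linarith, hlt⟩, ?_⟩
  -- `h` is bounded below by `M` up to `nπ + π/2`, while `tan u · Δ u ≥ c √(1 − k²) = 1 + |M|`.
  have hM : M ≤ ellH k (n * π + arctan c) := antitone_ellH hk hlt.le
  have hΔ : c * √(1 - k ^ 2) ≤ c * ellDelta k (n * π + arctan c) :=
    mul_le_mul_of_nonneg_left (sqrt_one_sub_sq_le_ellDelta _) hc.le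
  have hcs : c * √(1 - k ^ 2) = 1 + |M| := div_mul_cancel₀ _ hs.ne'
  rw [f4DivCos, htan]
  linarith [neg_abs_le M]

theorem continuousOn_f4DivCos (hk : k ^ 2 < 1) (n : ℤ) :
    ContinuousOn (f4DivCos k) (Set.Ioo ((2 * (n : ℝ) - 1) * π / 2) ((2 * (n : ℝ) + 1) * π / 2)) :=
  fun _ hu => (hasDerivAt_f4DivCos hk (cos_ne_zero_of_mem_Ioo hu)).continuousAt.continuousWithinAt

theorem strictMonoOn_f4DivCos (hk : k ^ 2 < 1) (n : ℤ) :
    StrictMonoOn (f4DivCos k)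
      (Set.Ioo ((2 * (n : ℝ) - 1) * π / 2) ((2 * (n : ℝ) + 1) * π / 2)) := by
  refine strictMonoOn_of_deriv_pos (convex_Ioo _ _) (continuousOn_f4DivCos hk n) fun u hu => ?_
  rw [interior_Ioo] at hu
  have hc := cos_ne_zero_of_mem_Ioo hu
  rw [(hasDerivAt_f4DivCos hk hc).deriv]
  exact div_pos (by linarith) (mul_pos (ellDelta_pos hk u) (sq_pos_iff.mpr hc))

theorem f4_eq_cos_mul_f4DivCos {u : ℝ} (hc : cos u ≠ 0) :
    -EllE u k * cos u + (1 - k ^ 2) * EllF u k * cos u + sin u * √(1 - k ^ 2 * sin u ^ 2) =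
      cos u * f4DivCos k u := by
  rw [f4DivCos, ellH, ellDelta, tan_eq_sin_div_cos]
  field_simp
  ring

end

/-- For `k ∈ (0,1)` and every integer `n ≥ 1`, the function
`u ↦ −E(u,k)·cos u + (1−k²)·F(u,k)·cos u + sin u·√(1 − k² sin² u)`
(the function `f₄` of the paper in the Legendre variable) has exactly one zero in
`((2n−1)π/2, (2n+1)π/2)`, and this zero lies in `(nπ, nπ + π/2)`. -/
theorem f4_unique_root (k : ℝ) (hk : k ∈ Set.Ioo (0:ℝ) 1) (n : ℕ) (hn : 1 ≤ n) :
    (∃! u : ℝ, u ∈ Set.Ioo ((2 * (n:ℝ) - 1) * π / 2) ((2 * (n:ℝ) + 1) * π / 2) ∧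
      -EllE u k * Real.cos u + (1 - k ^ 2) * EllF u k * Real.cos u +
        Real.sin u * Real.sqrt (1 - k ^ 2 * Real.sin u ^ 2) = 0) ∧
    (∀ u : ℝ, u ∈ Set.Ioo ((2 * (n:ℝ) - 1) * π / 2) ((2 * (n:ℝ) + 1) * π / 2) →
      -EllE u k * Real.cos u + (1 - k ^ 2) * EllF u k * Real.cos u +
        Real.sin u * Real.sqrt (1 - k ^ 2 * Real.sin u ^ 2) = 0 →
      u ∈ Set.Ioo ((n:ℝ) * π) ((n:ℝ) * π + π / 2)) := by
  have hk2 : k ^ 2 < 1 := by nlinarith [hk.1, hk.2]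
  set I := Set.Ioo ((2 * (n:ℝ) - 1) * π / 2) ((2 * (n:ℝ) + 1) * π / 2)
  have hI : ∀ u ∈ I, cos u ≠ 0 := fun u hu =>
    cos_ne_zero_of_mem_Ioo (n := n) (by simpa only [Int.cast_natCast] using hu)
  have hzero : ∀ u ∈ I, -EllE u k * cos u + (1 - k ^ 2) * EllF u k * cos u +
      sin u * √(1 - k ^ 2 * sin u ^ 2) = 0 ↔ f4DivCos k u = 0 := fun u hu => by
    rw [f4_eq_cos_mul_f4DivCos (hI u hu), mul_eq_zero, or_iff_right (hI u hu)]
  have hneg : f4DivCos k (n * π) < 0 := by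
    have : (1 : ℝ) ≤ n := mod_cast hn
    rw [f4DivCos, tan_nat_mul_pi, zero_mul, add_zero]
    exact ellH_neg hk2 hk.1.ne' (by nlinarith [pi_pos])
  obtain ⟨b, hb, hpos⟩ : ∃ b ∈ Set.Ioo (n * π) (n * π + π / 2), 0 < f4DivCos k b :=
    mod_cast exists_f4DivCos_pos hk2 n
  have hIcc : Set.Icc (n * π) b ⊆ I := fun u hu =>
    ⟨by nlinarith [hu.1, pi_pos], by nlinarith [hu.2, hb.2, pi_pos]⟩
  obtain ⟨x, hx, hiff⟩ := StrictMonoOn.exists_mem_Ioo_forall_eq_zero_iff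
    (by simpa only [Int.cast_natCast] using strictMonoOn_f4DivCos hk2 n)
    (by simpa only [Int.cast_natCast] using continuousOn_f4DivCos hk2 n) hb.1.le hIcc hneg hpos
  have hxI : x ∈ I := hIcc (Set.Ioo_subset_Icc_self hx)
  refine ⟨⟨x, ⟨hxI, (hzero x hxI).2 ((hiff x hxI).2 rfl)⟩,
    fun u hu => (hiff u hu.1).1 ((hzero u hu.1).1 hu.2)⟩, fun u hu hf => ?_⟩
  rw [(hiff u hu).1 ((hzero u hu).1 hf)]
  exact ⟨hx.1, hx.2.trans hb.2⟩
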